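/- The map q̄ : Z₀ → ℝP² is a locally trivial fiber bundle with fiber S²: for every ℓ ∈ ℝP² there exist an open neighborhood U of ℓ and a homeomorphism h : q̄⁻¹(U) ≃ U × S² such that for every z ∈ q̄⁻¹(U) the first coordinate of h(z) equals q̄(z). -/

import Mathlib

noncomputable section

/-- The unit 2-sphere `S²` in Euclidean `ℝ³`. -/
abbrev S2 : Type := Metric.sphere (0 : EuclideanSpace ℝ (Fin 3)) 1

/-- The reflection `r(y₁,y₂,y₃) = (y₁,y₂,−y₃)` of `ℝ³`. -/
def rFun (y : EuclideanSpace ℝ (Fin 3)) : EuclideanSpace ℝ (Fin 3) :=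
  WithLp.toLp 2 (fun i => if i = 2 then -y i else y i)

lemma rFun_norm (y : EuclideanSpace ℝ (Fin 3)) : ‖rFun y‖ = ‖y‖ := by
  simp only [EuclideanSpace.norm_eq]
  congr 1
  refine Finset.sum_congr rfl fun i _ => ?_
  by_cases h : i = 2 <;> simp [rFun, h]

/-- The reflection `r`, restricted to the unit sphere `S²`. -/
def sphereR (x : S2) : S2 :=
  ⟨rFun x.val, by
    rw [mem_sphere_zero_iff_norm, rFun_norm]
    exact mem_sphere_zero_iff_norm.mp x.2⟩

/-- The map `τ : S² × S² → S² × S²`, `τ(x,y) = (r(x), −y)`. -/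
def tau (p : S2 × S2) : S2 × S2 := (sphereR p.1, -p.2)

lemma rFun_rFun (y : EuclideanSpace ℝ (Fin 3)) : rFun (rFun y) = y := by
  refine PiLp.ext fun i => ?_
  by_cases h : i = 2 <;> simp [rFun, h]

lemma tau_tau (p : S2 × S2) : tau (tau p) = p := by
  obtain ⟨x, y⟩ := p
  simp only [tau, neg_neg]
  exact Prod.ext (Subtype.ext (rFun_rFun x.val)) rfl

/-- The equivalence relation on `S² × S²` given by `p ∼ q ↔ (q = p or q = τ(p))`. -/
def tauSetoid : Setoid (S2 × S2) where
  r p q := q = p ∨ q = tau p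
  iseqv := by
    constructor
    · intro p; left; rfl
    · rintro p q (rfl | rfl)
      · left; rfl
      · right; exact (tau_tau p).symm
    · rintro p q r (rfl | rfl) (rfl | rfl)
      · left; rfl
      · right; rfl
      · right; rfl
      · left; exact tau_tau p

/-- The quotient space `Z₀ = (S² × S²)/∼`, with the quotient topology. -/
abbrev Z0 : Type := Quotient tauSetoid

/-- The quotient map `π : S² × S² → Z₀`. -/
def pi0 : S2 × S2 → Z0 := Quotient.mk tauSetoid

/-- The real projective plane `ℝP²`, the projectivization of `ℝ³`. -/
abbrev RP2 : Type := Projectivization ℝ (EuclideanSpace ℝ (Fin 3))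

/-- `ℝP²` carries the quotient topology from the subspace of nonzero vectors of `ℝ³`. -/
instance : TopologicalSpace RP2 :=
  inferInstanceAs (TopologicalSpace
    (Quotient (projectivizationSetoid ℝ (EuclideanSpace ℝ (Fin 3)))))

lemma sphere_ne_zero (y : S2) : (y : EuclideanSpace ℝ (Fin 3)) ≠ 0 := by
  intro h0
  have h := mem_sphere_zero_iff_norm.mp y.2
  rw [h0] at h
  simp at h

/-- The map `q : S² × S² → ℝP²`, `q(x,y) = [y]`. -/
def qFun (p : S2 × S2) : RP2 := Projectivization.mk ℝ p.2.val (sphere_ne_zero p.2)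

lemma qFun_tau (p : S2 × S2) : qFun (tau p) = qFun p := by
  refine (Projectivization.mk_eq_mk_iff ℝ _ _ _ _).mpr ⟨-1, ?_⟩
  show (-1 : ℝˣ) • (p.2.val) = ((tau p).2).val
  simp [tau, Units.smul_def]

/-- The descended map `q̄ : Z₀ → ℝP²`, satisfying `q̄ ∘ π = q`. -/
def qbar : Z0 → RP2 :=
  Quotient.lift qFun (by
    rintro a b (rfl | rfl)
    · rfl
    · exact (qFun_tau a).symm)

/-!
Fix `ℓ = [v]` and let `U` be the set of lines not orthogonal to `v`. Each line in `U` meets the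
open hemisphere `H = {y ∈ S² | ⟪y, v⟫ > 0}` in exactly one point, and the inverse of `H → U`,
`[w] ↦ ⟪w, v⟫ • w / ‖⟪w, v⟫ • w‖`, is continuous and does not depend on the representative `w`;
so `H ≃ₜ U`. Since `τ` flips the sign of `⟪y, v⟫`, every class in `q̄⁻¹(U)` has exactly one
representative `(x, y)` with `y ∈ H`, and `π` is an open map because `τ` is a homeomorphism.
Hence `(y, x) ↦ π(x, y)` is a homeomorphism `H × S² ≃ₜ q̄⁻¹(U)`, and it lies over `U`.
-/

open NormedSpace (normalize_smul_of_pos normalize_eq_self_of_norm_eq_one norm_normalize)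
open Projectivization Topology
open scoped RealInnerProductSpace

section HemisphereRep

variable {V : Type*} [NormedAddCommGroup V] [InnerProductSpace ℝ V] (v : V)

def hemisphereRep (w : V) : V := NormedSpace.normalize (⟪w, v⟫ • w)

lemma hemisphereRep_smul {a : ℝ} (ha : a ≠ 0) (w : V) :
    hemisphereRep v (a • w) = hemisphereRep v w := by
  rw [hemisphereRep, hemisphereRep, real_inner_smul_left, smul_smul, mul_right_comm, ← smul_smul]
  exact normalize_smul_of_pos (mul_self_pos.2 ha) _

lemma hemisphereRep_of_norm_eq_one {y : V} (hy : ‖y‖ = 1) (hpos : 0 < ⟪y, v⟫) :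
    hemisphereRep v y = y := by
  rw [hemisphereRep, normalize_smul_of_pos hpos, normalize_eq_self_of_norm_eq_one hy]

lemma smul_ne_zero_of_inner_ne_zero {w : V} (hw : ⟪w, v⟫ ≠ 0) : ⟪w, v⟫ • w ≠ 0 :=
  smul_ne_zero hw (by rintro rfl; simp at hw)

lemma norm_hemisphereRep {w : V} (hw : ⟪w, v⟫ ≠ 0) : ‖hemisphereRep v w‖ = 1 :=
  norm_normalize (smul_ne_zero_of_inner_ne_zero v hw)

lemma inner_hemisphereRep_pos {w : V} (hw : ⟪w, v⟫ ≠ 0) : 0 < ⟪hemisphereRep v w, v⟫ := by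
  have := norm_pos_iff.2 (smul_ne_zero_of_inner_ne_zero v hw)
  rw [hemisphereRep, NormedSpace.normalize, real_inner_smul_left, real_inner_smul_left]
  exact mul_pos (inv_pos.2 this) (mul_self_pos.2 hw)

lemma hemisphereRep_eq_smul (w : V) : hemisphereRep v w = (‖⟪w, v⟫ • w‖⁻¹ * ⟪w, v⟫) • w := by
  rw [hemisphereRep, NormedSpace.normalize, smul_smul]

lemma continuousOn_hemisphereRep : ContinuousOn (hemisphereRep v) {w | ⟪w, v⟫ ≠ 0} := by
  unfold hemisphereRep NormedSpace.normalize
  refine ContinuousOn.smul (ContinuousOn.inv₀ (by fun_prop) fun w hw => ?_) (by fun_prop)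
  exact norm_ne_zero_iff.2 (smul_ne_zero_of_inner_ne_zero v hw)

end HemisphereRep

local notation "ℝ³" => EuclideanSpace ℝ (Fin 3)

def linesNotOrthogonalTo (v : ℝ³) : Set RP2 := {m | ⟪m.rep, v⟫ ≠ 0}

lemma mk_mem_linesNotOrthogonalTo_iff (v : ℝ³) {w : ℝ³} (hw : w ≠ 0) :
    mk ℝ w hw ∈ linesNotOrthogonalTo v ↔ ⟪w, v⟫ ≠ 0 := by
  obtain ⟨a, ha⟩ := exists_smul_eq_mk_rep ℝ w hw
  rw [linesNotOrthogonalTo, Set.mem_ofPred_eq, ← ha, Units.smul_def, real_inner_smul_left,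
    mul_ne_zero_iff, and_iff_right a.ne_zero]

lemma rep_mem_linesNotOrthogonalTo (ℓ : RP2) : ℓ ∈ linesNotOrthogonalTo ℓ.rep :=
  inner_self_ne_zero.2 ℓ.rep_nonzero

lemma isQuotientMap_mk' : IsQuotientMap (mk' ℝ : {w : ℝ³ // w ≠ 0} → RP2) :=
  isQuotientMap_quotient_mk'

lemma isOpen_linesNotOrthogonalTo (v : ℝ³) : IsOpen (linesNotOrthogonalTo v) := by
  rw [← isQuotientMap_mk'.isOpen_preimage]
  have : mk' ℝ ⁻¹' linesNotOrthogonalTo v = {w : {w : ℝ³ // w ≠ 0} | ⟪w.1, v⟫ ≠ 0} :=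
    Set.ext fun w => mk_mem_linesNotOrthogonalTo_iff v w.2
  rw [this]
  exact isOpen_ne_fun (by fun_prop) continuous_const

lemma hemisphereRep_rep (v : ℝ³) {w : ℝ³} (hw : w ≠ 0) :
    hemisphereRep v (mk ℝ w hw).rep = hemisphereRep v w := by
  obtain ⟨a, ha⟩ := exists_smul_eq_mk_rep ℝ w hw
  rw [← ha, Units.smul_def, hemisphereRep_smul v a.ne_zero]

lemma continuous_hemisphereRep_rep (v : ℝ³) :
    Continuous fun m : linesNotOrthogonalTo v => hemisphereRep v m.1.rep := by
  have hq := isQuotientMap_mk'.restrictPreimage_isOpen (isOpen_linesNotOrthogonalTo v)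
  rw [hq.continuous_iff]
  have hrep (w : mk' ℝ ⁻¹' linesNotOrthogonalTo v) :
      hemisphereRep v (mk' ℝ w.1).rep = hemisphereRep v w.1.1 :=
    hemisphereRep_rep v w.1.2
  simp only [Function.comp_def, Set.restrictPreimage_coe, hrep]
  exact (continuousOn_hemisphereRep v).comp_continuous (by fun_prop)
    fun w => (mk_mem_linesNotOrthogonalTo_iff v w.1.2).1 w.2

def openHemisphere (v : ℝ³) : Set S2 := {y | 0 < ⟪(y : ℝ³), v⟫}

lemma isOpen_openHemisphere (v : ℝ³) : IsOpen (openHemisphere v) :=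
  isOpen_lt continuous_const (by fun_prop)

def openHemisphereHomeomorph (v : ℝ³) : openHemisphere v ≃ₜ linesNotOrthogonalTo v where
  toFun y := ⟨mk ℝ y.1 (sphere_ne_zero y.1), (mk_mem_linesNotOrthogonalTo_iff v _).2 y.2.ne'⟩
  invFun m := ⟨⟨hemisphereRep v m.1.rep, mem_sphere_zero_iff_norm.2 (norm_hemisphereRep v m.2)⟩,
    inner_hemisphereRep_pos v m.2⟩
  left_inv y := by
    ext1; ext1
    exact (hemisphereRep_rep v _).trans
      (hemisphereRep_of_norm_eq_one v (mem_sphere_zero_iff_norm.1 y.1.2) y.2)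
  right_inv m := by
    ext1
    conv_rhs => rw [← mk_rep m.1]
    exact (mk_eq_mk_iff' ℝ _ _ _ _).2 ⟨_, (hemisphereRep_eq_smul v _).symm⟩
  continuous_toFun := (isQuotientMap_mk'.continuous.comp
    ((continuous_subtype_val.comp continuous_subtype_val).subtype_mk _)).subtype_mk _
  continuous_invFun := ((continuous_hemisphereRep_rep v).subtype_mk _).subtype_mk _

lemma continuous_rFun : Continuous rFun :=
  (PiLp.continuous_toLp 2 _).comp <| continuous_pi fun i => by
    split_ifs <;> fun_prop

lemma continuous_tau : Continuous tau :=
  ((continuous_rFun.comp (continuous_subtype_val.comp continuous_fst)).subtype_mk _).prodMk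
    continuous_snd.neg

lemma pi0_eq_pi0_iff {p q : S2 × S2} : pi0 p = pi0 q ↔ q = p ∨ q = tau p :=
  Quotient.eq

lemma preimage_image_pi0 (s : Set (S2 × S2)) : pi0 ⁻¹' (pi0 '' s) = s ∪ tau ⁻¹' s := by
  ext p
  simp only [Set.mem_preimage, Set.mem_image, pi0_eq_pi0_iff, Set.mem_union]
  constructor
  · rintro ⟨q, hq, rfl | rfl⟩
    · exact Or.inl hq
    · exact Or.inr ((tau_tau q).symm ▸ hq)
  · rintro (hp | hp)
    · exact ⟨p, hp, Or.inl rfl⟩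
    · exact ⟨tau p, hp, Or.inr (tau_tau p).symm⟩

lemma isQuotientMap_pi0 : IsQuotientMap pi0 := isQuotientMap_quotient_mk'

lemma isOpenMap_pi0 : IsOpenMap pi0 := fun s hs => by
  rw [← isQuotientMap_pi0.isOpen_preimage, preimage_image_pi0]
  exact hs.union (hs.preimage continuous_tau)

lemma inner_neg_sphere_left (y : S2) (v : ℝ³) : ⟪((-y : S2) : ℝ³), v⟫ = -⟪(y : ℝ³), v⟫ := by
  rw [coe_neg_sphere, inner_neg_left]

def pi0OnHemisphere (v : ℝ³) : openHemisphere v × S2 → qbar ⁻¹' linesNotOrthogonalTo v :=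
  fun p => ⟨pi0 (p.2, p.1), (mk_mem_linesNotOrthogonalTo_iff v _).2 p.1.2.ne'⟩

lemma continuous_pi0OnHemisphere (v : ℝ³) : Continuous (pi0OnHemisphere v) :=
  (isQuotientMap_pi0.continuous.comp
    (continuous_snd.prodMk (continuous_subtype_val.comp continuous_fst))).subtype_mk _

lemma isOpenMap_pi0OnHemisphere (v : ℝ³) : IsOpenMap (pi0OnHemisphere v) := by
  have hval : IsOpenMap fun p : openHemisphere v × S2 => ((p.1 : S2), p.2) :=
    (isOpen_openHemisphere v).isOpenMap_subtype_val.prodMap IsOpenMap.id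
  exact IsOpenMap.codRestrict
    (isOpenMap_pi0.comp ((Homeomorph.prodComm _ _).isOpenMap.comp hval)) _

lemma injective_pi0OnHemisphere (v : ℝ³) : Function.Injective (pi0OnHemisphere v) := by
  rintro ⟨y, x⟩ ⟨y', x'⟩ h
  rcases pi0_eq_pi0_iff.1 (congrArg Subtype.val h) with h' | h'
  · simp only [Prod.mk.injEq] at h'
    exact Prod.ext (Subtype.ext h'.2.symm) h'.1.symm
  · have hy : 0 < ⟪((y : S2) : ℝ³), v⟫ := y.2
    have hy' : 0 < ⟪((y' : S2) : ℝ³), v⟫ := y'.2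
    rw [show (y' : S2) = -y from congrArg Prod.snd h', inner_neg_sphere_left] at hy'
    linarith

lemma surjective_pi0OnHemisphere (v : ℝ³) : Function.Surjective (pi0OnHemisphere v) := by
  rintro ⟨z, hz⟩
  obtain ⟨⟨x, y⟩, rfl⟩ := Quotient.exists_rep z
  have hy : ⟪(y : ℝ³), v⟫ ≠ 0 := (mk_mem_linesNotOrthogonalTo_iff v _).1 hz
  rcases hy.lt_or_gt with hneg | hpos
  · refine ⟨(⟨-y, ?_⟩, sphereR x), Subtype.ext ?_⟩
    · show 0 < ⟪((-y : S2) : ℝ³), v⟫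
      rw [inner_neg_sphere_left]; linarith
    · show pi0 (tau (x, y)) = pi0 (x, y)
      exact (pi0_eq_pi0_iff.2 (Or.inr rfl)).symm
  · exact ⟨(⟨y, hpos⟩, x), rfl⟩

def hemisphereProdHomeomorph (v : ℝ³) :
    openHemisphere v × S2 ≃ₜ qbar ⁻¹' linesNotOrthogonalTo v :=
  (Equiv.ofBijective _ ⟨injective_pi0OnHemisphere v, surjective_pi0OnHemisphere v⟩)
    |>.toHomeomorphOfContinuousOpen (continuous_pi0OnHemisphere v) (isOpenMap_pi0OnHemisphere v)

/-- `q̄ : Z₀ → ℝP²` is a locally trivial fiber bundle with fiber `S²`. -/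
theorem qbar_is_locally_trivial_sphere_bundle :
    ∀ ℓ : RP2, ∃ U : Set RP2, IsOpen U ∧ ℓ ∈ U ∧
      ∃ h : ↥(qbar ⁻¹' U) ≃ₜ ↥U × S2,
        ∀ z : ↥(qbar ⁻¹' U), ((h z).1 : RP2) = qbar z.val := by
  intro ℓ
  let e := hemisphereProdHomeomorph ℓ.rep
  refine ⟨linesNotOrthogonalTo ℓ.rep, isOpen_linesNotOrthogonalTo ℓ.rep,
    rep_mem_linesNotOrthogonalTo ℓ,
    e.symm.trans ((openHemisphereHomeomorph ℓ.rep).prodCongr (Homeomorph.refl S2)), fun z => ?_⟩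
  conv_rhs => rw [← e.apply_symm_apply z]
  rfl
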